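/- arXiv:1502.07870 — 2 statements merged into one kernel-verified Lean document; each statement's English description precedes it below -/
import Mathlib

section
/- Let x = x[1..n] be an indeterminate string and y = y[1..n] an integer array. Then y is the prefix table of x if and only if for each i ∈ 1..n both: (a) x[1..y[i]] ≈ x[i..i+y[i]−1] (position-wise matching), and (b) if i + y[i] ≤ n then x[y[i]+1] ≉ x[i+y[i]]. -/
/-- `x[i..i+ℓ-1]` matches the prefix `x[1..ℓ]` of `x[1..n]` position-wise.  -/
def MatchPref {α : Type*} (x : ℕ → Finset α) (n i ℓ : ℕ) : Prop :=
  i + ℓ ≤ n + 1 ∧ ∀ h, h < ℓ → ∃ a, a ∈ x (1 + h) ∧ a ∈ x (i + h)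

/-- `y` is the prefix table of the (1-indexed) string `x[1..n]`:
for each `i ∈ 1..n`, `y i` is the length of the longest prefix of `x[i..n]`
matching a prefix of `x`. -/
def IsPrefixTable {α : Type*} (x : ℕ → Finset α) (n : ℕ) (y : ℕ → ℕ) : Prop :=
  ∀ i, 1 ≤ i → i ≤ n → MatchPref x n i (y i) ∧ ∀ ℓ, MatchPref x n i ℓ → ℓ ≤ y i

/-- A feasible array `y[1..n]`. -/
def Feasible (y : ℕ → ℕ) (n : ℕ) : Prop :=
  y 1 = n ∧ ∀ i, 2 ≤ i → i ≤ n → y i ≤ n - i + 1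

/-- Positive edges of the prefix graph of `y[1..n]`. -/
def posEdges (y : ℕ → ℕ) (n : ℕ) : Finset (Sym2 ℕ) :=
  (Finset.Icc 2 n).biUnion fun i => (Finset.Icc 1 (y i)).image fun h => s(h, i + h - 1)

/-- Negative edges of the prefix graph of `y[1..n]`. -/
def negEdges (y : ℕ → ℕ) (n : ℕ) : Finset (Sym2 ℕ) :=
  ((Finset.Icc 2 n).filter fun i => i + y i ≤ n).image fun i => s(1 + y i, i + y i)

/-- The positive subgraph `P⁺` of the prefix graph of `y[1..n]`, as a simple graph. -/
def Pplus (y : ℕ → ℕ) (n : ℕ) : SimpleGraph ℕ where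
  Adj a b := a ≠ b ∧ s(a, b) ∈ posEdges y n
  symm := ⟨by
    rintro a b ⟨h1, h2⟩
    exact ⟨h1.symm, by rwa [Sym2.eq_swap]⟩⟩
  loopless := ⟨by rintro a ⟨h1, _⟩; exact h1 rfl⟩

namespace MatchPref

variable {α : Type*} {x : ℕ → Finset α} {n i ℓ m : ℕ}

theorem succ (hℓ : MatchPref x n i ℓ) (hfit : i + ℓ ≤ n)
    (hnext : ∃ a, a ∈ x (1 + ℓ) ∧ a ∈ x (i + ℓ)) : MatchPref x n i (ℓ + 1) := by
  refine ⟨by omega, fun h hh => ?_⟩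
  obtain hh | rfl := Nat.lt_succ_iff_lt_or_eq.mp hh
  · exact hℓ.2 h hh
  · exact hnext

theorem le_of_not_match (hℓ : MatchPref x n i ℓ)
    (hstop : i + m ≤ n → ¬ ∃ a, a ∈ x (1 + m) ∧ a ∈ x (i + m)) : ℓ ≤ m := by
  by_contra! hlt
  exact hstop (by have := hℓ.1; omega) (hℓ.2 m hlt)

theorem isMax_iff :
    (MatchPref x n i m ∧ ∀ ℓ, MatchPref x n i ℓ → ℓ ≤ m) ↔
      MatchPref x n i m ∧ (i + m ≤ n → ¬ ∃ a, a ∈ x (1 + m) ∧ a ∈ x (i + m)) :=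
  and_congr_right fun hm =>
    ⟨fun hmax hfit hnext => m.not_succ_le_self (hmax _ (hm.succ hfit hnext)),
      fun hstop _ hℓ => hℓ.le_of_not_match hstop⟩

end MatchPref

theorem prefixTable_iff_general {α : Type*} (n : ℕ) (x : ℕ → Finset α) (y : ℕ → ℕ) :
    IsPrefixTable x n y ↔
      ∀ i, 1 ≤ i → i ≤ n →
        (i + y i ≤ n + 1 ∧ ∀ h, h < y i → ∃ a, a ∈ x (1 + h) ∧ a ∈ x (i + h)) ∧
        (i + y i ≤ n → ¬ ∃ a, a ∈ x (1 + y i) ∧ a ∈ x (i + y i)) :=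
  forall₃_congr fun _ _ _ => MatchPref.isMax_iff

/-- `y` is the prefix table of `x[1..n]` iff for every `i ∈ 1..n`:
(a) `x[1..y[i]] ≈ x[i..i+y[i]-1]` (in particular that substring fits in `x`), and
(b) if `i + y[i] ≤ n` then `x[y[i]+1] ≉ x[i+y[i]]`. -/
theorem prefixTable_iff {α : Type*} (n : ℕ) (x : ℕ → Finset α) (y : ℕ → ℕ)
    (hne : ∀ i, 1 ≤ i → i ≤ n → (x i).Nonempty) :
    IsPrefixTable x n y ↔
      ∀ i, 1 ≤ i → i ≤ n →
        (i + y i ≤ n + 1 ∧ ∀ h, h < y i → ∃ a, a ∈ x (1 + h) ∧ a ∈ x (i + h)) ∧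
        (i + y i ≤ n → ¬ ∃ a, a ∈ x (1 + y i) ∧ a ∈ x (i + y i)) :=
  prefixTable_iff_general n x y
end

section
/- Let y be a feasible array with prefix graph P = (V, E⁺ ∪ E⁻). Then y is the prefix table of some regular string (a string in which every letter is a singleton subset of the alphabet) if and only if every negative edge of P joins two vertices lying in distinct connected components of the positive subgraph P⁺ = (V, E⁺). -/
open SimpleGraph

theorem Finset.eq_of_card_eq_one_of_mem_of_mem {α : Type*} {s t : Finset α} {a : α}
    (hs : s.card = 1) (ht : t.card = 1) (has : a ∈ s) (hat : a ∈ t) : s = t := by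
  obtain ⟨b, rfl⟩ := Finset.card_eq_one.1 hs
  obtain ⟨c, rfl⟩ := Finset.card_eq_one.1 ht
  rw [Finset.mem_singleton] at has hat
  rw [← has, ← hat]

section MatchPref

variable {α : Type*} {x : ℕ → Finset α} {n i ℓ : ℕ}

theorem MatchPref.mono {k : ℕ} (h : MatchPref x n i ℓ) (hk : k ≤ ℓ) : MatchPref x n i k :=
  ⟨by have := h.1; omega, fun j hj => h.2 j (by omega)⟩

theorem matchPref_succ_iff :
    MatchPref x n i (ℓ + 1) ↔
      MatchPref x n i ℓ ∧ i + ℓ ≤ n ∧ ∃ a, a ∈ x (1 + ℓ) ∧ a ∈ x (i + ℓ) := by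
  constructor
  · rintro ⟨hle, hmatch⟩
    exact ⟨⟨by omega, fun j hj => hmatch j (by omega)⟩, by omega, hmatch ℓ (by omega)⟩
  · rintro ⟨⟨-, hmatch⟩, hle, hlast⟩
    refine ⟨by omega, fun j hj => ?_⟩
    rcases Nat.lt_succ_iff_lt_or_eq.1 hj with hj | rfl
    exacts [hmatch j hj, hlast]

end MatchPref

theorem mem_posEdges {y : ℕ → ℕ} {n : ℕ} {e : Sym2 ℕ} :
    e ∈ posEdges y n ↔ ∃ i, 2 ≤ i ∧ i ≤ n ∧ ∃ k < y i, e = s(1 + k, i + k) := by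
  simp only [posEdges, Finset.mem_biUnion, Finset.mem_image, Finset.mem_Icc]
  constructor
  · rintro ⟨i, ⟨hi, hin⟩, h, ⟨hh, hhy⟩, rfl⟩
    refine ⟨i, hi, hin, h - 1, by omega, ?_⟩
    rw [show 1 + (h - 1) = h by omega, show i + (h - 1) = i + h - 1 by omega]
  · rintro ⟨i, hi, hin, k, hk, rfl⟩
    refine ⟨i, ⟨hi, hin⟩, k + 1, ⟨by omega, hk⟩, ?_⟩
    rw [show i + (k + 1) - 1 = i + k by omega, Nat.add_comm k 1]

theorem Pplus_reachable_of_lt {y : ℕ → ℕ} {n i k : ℕ} (hi : 2 ≤ i) (hin : i ≤ n)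
    (hk : k < y i) : (Pplus y n).Reachable (1 + k) (i + k) :=
  Adj.reachable ⟨by omega, mem_posEdges.2 ⟨i, hi, hin, k, hk, rfl⟩⟩

namespace IsPrefixTable

variable {α : Type*} {x : ℕ → Finset α} {n : ℕ} {y : ℕ → ℕ}
  (hreg : ∀ i, 1 ≤ i → i ≤ n → (x i).card = 1) (hpt : IsPrefixTable x n y)
include hreg hpt

theorem letter_eq_of_lt {i k : ℕ} (hi : 1 ≤ i) (hin : i ≤ n) (hk : k < y i) :
    x (1 + k) = x (i + k) := by
  obtain ⟨⟨hle, hmatch⟩, -⟩ := hpt i hi hin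
  obtain ⟨a, ha₁, ha₂⟩ := hmatch k hk
  exact Finset.eq_of_card_eq_one_of_mem_of_mem (hreg _ (by omega) (by omega))
    (hreg _ (by omega) (by omega)) ha₁ ha₂

theorem letter_eq_of_reachable {a b : ℕ} (hr : (Pplus y n).Reachable a b) : x a = x b := by
  obtain ⟨w⟩ := hr
  induction w with
  | nil => rfl
  | @cons u v _ hadj _ ih =>
    refine Eq.trans ?_ ih
    obtain ⟨i, hi, hin, k, hk, he⟩ := mem_posEdges.1 hadj.2
    have hxk := hpt.letter_eq_of_lt hreg (by omega) hin hk
    rcases Sym2.eq_iff.1 he with ⟨rfl, rfl⟩ | ⟨rfl, rfl⟩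
    exacts [hxk, hxk.symm]

theorem not_reachable_of_negEdge {i : ℕ} (hi : 2 ≤ i) (hin : i ≤ n) (hneg : i + y i ≤ n) :
    ¬ (Pplus y n).Reachable (1 + y i) (i + y i) := by
  intro hr
  obtain ⟨a, ha⟩ := Finset.card_pos.1 (by rw [hreg (1 + y i) (by omega) (by omega)]; omega)
  have hext : MatchPref x n i (y i + 1) :=
    matchPref_succ_iff.2 ⟨(hpt i (by omega) hin).1, hneg,
      a, ha, hpt.letter_eq_of_reachable hreg hr ▸ ha⟩
  have := (hpt i (by omega) hin).2 _ hext
  omega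

end IsPrefixTable

def componentLetters {V : Type*} (G : SimpleGraph V) (v : V) : Finset G.ConnectedComponent :=
  {G.connectedComponentMk v}

theorem exists_mem_componentLetters_iff {V : Type*} {G : SimpleGraph V} {u v : V} :
    (∃ c, c ∈ componentLetters G u ∧ c ∈ componentLetters G v) ↔ G.Reachable u v := by
  simp [componentLetters, ConnectedComponent.eq]

theorem isPrefixTable_componentLetters {y : ℕ → ℕ} {n : ℕ} (hy : Feasible y n)
    (hneg : ∀ i, 2 ≤ i → i ≤ n → i + y i ≤ n → ¬ (Pplus y n).Reachable (1 + y i) (i + y i)) :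
    IsPrefixTable (componentLetters (Pplus y n)) n y := by
  intro i hi hin
  obtain hi | rfl : 2 ≤ i ∨ i = 1 := by omega
  · have hyi := hy.2 i hi hin
    refine ⟨⟨by omega, fun k hk => exists_mem_componentLetters_iff.2 ?_⟩, fun ℓ hℓ => ?_⟩
    · exact Pplus_reachable_of_lt hi hin hk
    · by_contra! hlt
      obtain ⟨-, hle, hmatch⟩ := matchPref_succ_iff.1 (hℓ.mono hlt)
      exact hneg i hi hin hle (exists_mem_componentLetters_iff.1 hmatch)
  · have hy1 := hy.1
    refine ⟨⟨by omega, fun k _ => exists_mem_componentLetters_iff.2 .rfl⟩, fun ℓ hℓ => ?_⟩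
    have := hℓ.1
    omega

/-- A feasible array `y` is the prefix table of some regular string (all letters
singletons) iff every negative edge of its prefix graph joins two vertices lying in
distinct connected components of the positive subgraph `P⁺`. -/
theorem regular_iff_negEdges_cross_components (n : ℕ) (y : ℕ → ℕ) (hy : Feasible y n) :
    (∃ (α : Type) (x : ℕ → Finset α),
      (∀ i, 1 ≤ i → i ≤ n → (x i).card = 1) ∧ IsPrefixTable x n y) ↔
    (∀ i, 2 ≤ i → i ≤ n → i + y i ≤ n →
      ¬ (Pplus y n).Reachable (1 + y i) (i + y i)) := by
  constructor
  · rintro ⟨α, x, hreg, hpt⟩ i hi hin hneg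
    exact hpt.not_reachable_of_negEdge hreg hi hin hneg
  · intro hneg
    exact ⟨_, componentLetters (Pplus y n), fun _ _ _ => Finset.card_singleton _,
      isPrefixTable_componentLetters hy hneg⟩
end
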